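/- arXiv:1911.12737 — 2 statements merged into one kernel-verified Lean document; each statement's English description precedes it below -/
import Mathlib

section
/- Correctness of pierce: for every LL(1) focused syntax (s, c) and every token t with kind t = k and k ∈ First s, and for all token sequences ts and values v: Matches (unfocus (elem k, pierce k s c)) (t :: ts) v if and only if Matches (unfocus (s, c)) (t :: ts) v. -/
set_option autoImplicit false

/-- Context-free syntaxes (value-aware context-free expressions). -/
inductive Syn (Token Kind : Type) (Var : Type → Type) : Type → Type 1 where
  | elem (k : Kind) : Syn Token Kind Var Token
  | fail {A : Type} : Syn Token Kind Var A
  | eps {A : Type} (v : A) : Syn Token Kind Var A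
  | disj {A : Type} (s₁ s₂ : Syn Token Kind Var A) : Syn Token Kind Var A
  | seqn {A B : Type} (s₁ : Syn Token Kind Var A) (s₂ : Syn Token Kind Var B) :
      Syn Token Kind Var (A × B)
  | map {A B : Type} (f : A → B) (s : Syn Token Kind Var A) : Syn Token Kind Var B
  | var {A : Type} (x : Var A) : Syn Token Kind Var A

section

variable {Token Kind : Type} {Var : Type → Type}
variable (kd : Token → Kind) (env : ∀ A : Type, Var A → Syn Token Kind Var A)

/-- Semantics of syntaxes. -/
inductive Matches : ∀ {A : Type}, Syn Token Kind Var A → List Token → A → Prop where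
  | elem {k : Kind} {t : Token} (h : kd t = k) : Matches (Syn.elem k) [t] t
  | eps {A : Type} (v : A) : Matches (Syn.eps v) [] v
  | disjL {A : Type} {s₁ s₂ : Syn Token Kind Var A} {ts : List Token} {v : A} :
      Matches s₁ ts v → Matches (Syn.disj s₁ s₂) ts v
  | disjR {A : Type} {s₁ s₂ : Syn Token Kind Var A} {ts : List Token} {v : A} :
      Matches s₂ ts v → Matches (Syn.disj s₁ s₂) ts v
  | seqn {A B : Type} {s₁ : Syn Token Kind Var A} {s₂ : Syn Token Kind Var B}
      {ts₁ ts₂ : List Token} {v₁ : A} {v₂ : B} :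
      Matches s₁ ts₁ v₁ → Matches s₂ ts₂ v₂ →
      Matches (Syn.seqn s₁ s₂) (ts₁ ++ ts₂) (v₁, v₂)
  | map {A B : Type} (f : A → B) {s : Syn Token Kind Var A} {ts : List Token} {v : A} :
      Matches s ts v → Matches (Syn.map f s) ts (f v)
  | var {A : Type} (x : Var A) {ts : List Token} {v : A} :
      Matches (env A x) ts v → Matches (Syn.var x) ts v

/-- Productivity. -/
inductive Productive : ∀ {A : Type}, Syn Token Kind Var A → Prop where
  | eps {A : Type} (v : A) : Productive (Syn.eps v)
  | elem (k : Kind) : Productive (Syn.elem k)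
  | disjL {A : Type} {s₁ s₂ : Syn Token Kind Var A} :
      Productive s₁ → Productive (Syn.disj s₁ s₂)
  | disjR {A : Type} {s₁ s₂ : Syn Token Kind Var A} :
      Productive s₂ → Productive (Syn.disj s₁ s₂)
  | seqn {A B : Type} {s₁ : Syn Token Kind Var A} {s₂ : Syn Token Kind Var B} :
      Productive s₁ → Productive s₂ → Productive (Syn.seqn s₁ s₂)
  | map {A B : Type} (f : A → B) {s : Syn Token Kind Var A} :
      Productive s → Productive (Syn.map f s)
  | var {A : Type} (x : Var A) : Productive (env A x) → Productive (Syn.var x)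

/-- Nullability, with associated value. -/
inductive Nullable : ∀ {A : Type}, Syn Token Kind Var A → A → Prop where
  | eps {A : Type} (v : A) : Nullable (Syn.eps v) v
  | disjL {A : Type} {s₁ s₂ : Syn Token Kind Var A} {v : A} :
      Nullable s₁ v → Nullable (Syn.disj s₁ s₂) v
  | disjR {A : Type} {s₁ s₂ : Syn Token Kind Var A} {v : A} :
      Nullable s₂ v → Nullable (Syn.disj s₁ s₂) v
  | seqn {A B : Type} {s₁ : Syn Token Kind Var A} {s₂ : Syn Token Kind Var B} {v₁ : A} {v₂ : B} :
      Nullable s₁ v₁ → Nullable s₂ v₂ → Nullable (Syn.seqn s₁ s₂) (v₁, v₂)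
  | map {A B : Type} (f : A → B) {s : Syn Token Kind Var A} {v : A} :
      Nullable s v → Nullable (Syn.map f s) (f v)
  | var {A : Type} (x : Var A) {v : A} : Nullable (env A x) v → Nullable (Syn.var x) v

/-- First sets: `InFirst env k s` means `k ∈ First s`. -/
inductive InFirst : ∀ {A : Type}, Kind → Syn Token Kind Var A → Prop where
  | elem (k : Kind) : InFirst k (Syn.elem k)
  | disjL {A : Type} {k : Kind} {s₁ s₂ : Syn Token Kind Var A} :
      InFirst k s₁ → InFirst k (Syn.disj s₁ s₂)
  | disjR {A : Type} {k : Kind} {s₁ s₂ : Syn Token Kind Var A} :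
      InFirst k s₂ → InFirst k (Syn.disj s₁ s₂)
  | seqnL {A B : Type} {k : Kind} {s₁ : Syn Token Kind Var A} {s₂ : Syn Token Kind Var B} :
      InFirst k s₁ → Productive env s₂ → InFirst k (Syn.seqn s₁ s₂)
  | seqnR {A B : Type} {k : Kind} {s₁ : Syn Token Kind Var A} {s₂ : Syn Token Kind Var B}
      {v : A} : Nullable env s₁ v → InFirst k s₂ → InFirst k (Syn.seqn s₁ s₂)
  | map {A B : Type} {k : Kind} (f : A → B) {s : Syn Token Kind Var A} :
      InFirst k s → InFirst k (Syn.map f s)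
  | var {A : Type} {k : Kind} (x : Var A) : InFirst k (env A x) → InFirst k (Syn.var x)

/-- Should-not-follow sets: `InSNF env k s` means `k ∈ ShouldNotFollow s`. -/
inductive InSNF : ∀ {A : Type}, Kind → Syn Token Kind Var A → Prop where
  | disjL {A : Type} {k : Kind} {s₁ s₂ : Syn Token Kind Var A} :
      InSNF k s₁ → InSNF k (Syn.disj s₁ s₂)
  | disjR {A : Type} {k : Kind} {s₁ s₂ : Syn Token Kind Var A} :
      InSNF k s₂ → InSNF k (Syn.disj s₁ s₂)
  | disjFN {A : Type} {k : Kind} {s₁ s₂ : Syn Token Kind Var A} {v : A} :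
      InFirst env k s₁ → Nullable env s₂ v → InSNF k (Syn.disj s₁ s₂)
  | disjNF {A : Type} {k : Kind} {s₁ s₂ : Syn Token Kind Var A} {v : A} :
      Nullable env s₁ v → InFirst env k s₂ → InSNF k (Syn.disj s₁ s₂)
  | seqnL {A B : Type} {k : Kind} {s₁ : Syn Token Kind Var A} {s₂ : Syn Token Kind Var B}
      {v : B} : InSNF k s₁ → Nullable env s₂ v → InSNF k (Syn.seqn s₁ s₂)
  | seqnR {A B : Type} {k : Kind} {s₁ : Syn Token Kind Var A} {s₂ : Syn Token Kind Var B} :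
      Productive env s₁ → InSNF k s₂ → InSNF k (Syn.seqn s₁ s₂)
  | map {A B : Type} {k : Kind} (f : A → B) {s : Syn Token Kind Var A} :
      InSNF k s → InSNF k (Syn.map f s)
  | var {A : Type} {k : Kind} (x : Var A) : InSNF k (env A x) → InSNF k (Syn.var x)

/-- LL(1) conflicts. A syntax `s` is LL(1) iff `¬ HasConflict env s`. -/
inductive HasConflict : ∀ {A : Type}, Syn Token Kind Var A → Prop where
  | disjNN {A : Type} {s₁ s₂ : Syn Token Kind Var A} {v₁ v₂ : A} :
      Nullable env s₁ v₁ → Nullable env s₂ v₂ → HasConflict (Syn.disj s₁ s₂)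
  | disjFF {A : Type} {s₁ s₂ : Syn Token Kind Var A} {k : Kind} :
      InFirst env k s₁ → InFirst env k s₂ → HasConflict (Syn.disj s₁ s₂)
  | disjL {A : Type} {s₁ s₂ : Syn Token Kind Var A} :
      HasConflict s₁ → HasConflict (Syn.disj s₁ s₂)
  | disjR {A : Type} {s₁ s₂ : Syn Token Kind Var A} :
      HasConflict s₂ → HasConflict (Syn.disj s₁ s₂)
  | seqnSF {A B : Type} {s₁ : Syn Token Kind Var A} {s₂ : Syn Token Kind Var B} {k : Kind} :
      InSNF env k s₁ → InFirst env k s₂ → HasConflict (Syn.seqn s₁ s₂)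
  | seqnL {A B : Type} {s₁ : Syn Token Kind Var A} {s₂ : Syn Token Kind Var B} :
      HasConflict s₁ → HasConflict (Syn.seqn s₁ s₂)
  | seqnR {A B : Type} {s₁ : Syn Token Kind Var A} {s₂ : Syn Token Kind Var B} :
      HasConflict s₂ → HasConflict (Syn.seqn s₁ s₂)
  | map {A B : Type} (f : A → B) {s : Syn Token Kind Var A} :
      HasConflict s → HasConflict (Syn.map f s)
  | var {A : Type} (x : Var A) : HasConflict (env A x) → HasConflict (Syn.var x)

end

/-- Layers of a context, with above type `A` and below type `B`. -/
inductive Layer (Token Kind : Type) (Var : Type → Type) : Type → Type → Type 1 where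
  | apply {A B : Type} (f : A → B) : Layer Token Kind Var A B
  | prepend {A C : Type} (v : C) : Layer Token Kind Var A (C × A)
  | followBy {A C : Type} (s : Syn Token Kind Var C) : Layer Token Kind Var A (A × C)

/-- Type-aligned contexts (stacks of layers). -/
inductive Ctx (Token Kind : Type) (Var : Type → Type) : Type → Type → Type 1 where
  | nil {A : Type} : Ctx Token Kind Var A A
  | cons {A B C : Type} (l : Layer Token Kind Var A B) (c : Ctx Token Kind Var B C) :
      Ctx Token Kind Var A C

section

variable {Token Kind : Type} {Var : Type → Type}

def Ctx.isNil : ∀ {A B : Type}, Ctx Token Kind Var A B → Bool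
  | _, _, Ctx.nil => true
  | _, _, Ctx.cons _ _ => false

/-- Unfocusing a focused syntax. -/
def unfocus : ∀ {A B : Type}, Syn Token Kind Var A → Ctx Token Kind Var A B →
    Syn Token Kind Var B
  | _, _, s, Ctx.nil => s
  | _, _, s, Ctx.cons (Layer.apply f) c => unfocus (Syn.map f s) c
  | _, _, s, Ctx.cons (Layer.prepend v) c => unfocus (Syn.seqn (Syn.eps v) s) c
  | _, _, s, Ctx.cons (Layer.followBy s') c => unfocus (Syn.seqn s s') c

/-- Focused syntaxes with below type `B`. -/
def Focused (Token Kind : Type) (Var : Type → Type) (B : Type) : Type 1 :=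
  (A : Type) × Syn Token Kind Var A × Ctx Token Kind Var A B

def unfocusF {B : Type} (fs : Focused Token Kind Var B) : Syn Token Kind Var B :=
  unfocus fs.2.1 fs.2.2

def focusF {A : Type} (s : Syn Token Kind Var A) : Focused Token Kind Var A :=
  ⟨A, s, Ctx.nil⟩

/-- Plugging a value into a context. -/
def plug : ∀ {A B : Type}, A → Ctx Token Kind Var A B → Focused Token Kind Var B
  | A, _, v, Ctx.nil => ⟨A, Syn.eps v, Ctx.nil⟩
  | _, _, v, Ctx.cons (Layer.apply f) c => plug (f v) c
  | _, _, v, Ctx.cons (Layer.prepend v') c => plug (v', v) c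
  | _, _, v, Ctx.cons (Layer.followBy s) c => ⟨_, s, Ctx.cons (Layer.prepend v) c⟩

end

/-! Induction on the derivation of `k ∈ First s`. Each step of `pierce` replaces the focus `s'`
by a part `s` of it, pushing the rest into the context, and on inputs beginning with `t` the two
focused syntaxes match the same values. Only LL(1)-ness excludes the parses that `pierce`
discards: a competing branch of a disjunction, or a nonempty match of the nullable left factor of a
sequence, would put `kd t` into two First sets that must be disjoint; a match in which `s'` reads
nothing, so that `t` is read by the context, would put `kd t` into ShouldNotFollow of `s'` and
into First of what follows it. LL(1)-ness itself is inherited by the new focused syntax because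
every static predicate of `s` is contained in that of `s'`. -/
section

variable {Token Kind : Type} {Var : Type → Type}
variable {kd : Token → Kind} {env : ∀ A : Type, Var A → Syn Token Kind Var A}

/-- Inversion at `Syn.seqn` cannot be done by `cases` (it would have to solve `A × B = A' × B'`),
so inversion lemmas are first proved for `OnSeqn P s` with `s` arbitrary. -/
def OnSeqn (P : ∀ {A B : Type}, Syn Token Kind Var A → Syn Token Kind Var B → Prop) :
    ∀ {C : Type}, Syn Token Kind Var C → Prop
  | _, Syn.seqn s₁ s₂ => P s₁ s₂
  | _, _ => True

def OnSeqnVal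
    (P : ∀ {A B : Type}, Syn Token Kind Var A → Syn Token Kind Var B → A × B → Prop) :
    ∀ {C : Type}, Syn Token Kind Var C → C → Prop
  | _, Syn.seqn s₁ s₂, u => P s₁ s₂ u
  | _, _, _ => True

variable {A B : Type} {s₁ : Syn Token Kind Var A} {s₂ : Syn Token Kind Var B}

theorem Matches.seqn_inv {l : List Token} {u : A × B}
    (h : Matches kd env (Syn.seqn s₁ s₂) l u) :
    ∃ l₁ l₂, l = l₁ ++ l₂ ∧ Matches kd env s₁ l₁ u.1 ∧ Matches kd env s₂ l₂ u.2 := by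
  suffices ∀ {C : Type} {s : Syn Token Kind Var C} {u : C}, Matches kd env s l u →
      OnSeqnVal (fun s₁ s₂ u =>
        ∃ l₁ l₂, l = l₁ ++ l₂ ∧ Matches kd env s₁ l₁ u.1 ∧ Matches kd env s₂ l₂ u.2) s u from
    this h
  intro _ _ _ h
  cases h with
  | seqn h₁ h₂ => exact ⟨_, _, rfl, h₁, h₂⟩
  | _ => trivial

theorem Nullable.seqn_inv {u : A × B} (h : Nullable env (Syn.seqn s₁ s₂) u) :
    Nullable env s₁ u.1 ∧ Nullable env s₂ u.2 := by
  suffices ∀ {C : Type} {s : Syn Token Kind Var C} {u : C}, Nullable env s u →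
      OnSeqnVal (fun s₁ s₂ u => Nullable env s₁ u.1 ∧ Nullable env s₂ u.2) s u from this h
  intro _ _ _ h
  cases h with
  | seqn h₁ h₂ => exact ⟨h₁, h₂⟩
  | _ => trivial

theorem Productive.seqn_inv (h : Productive env (Syn.seqn s₁ s₂)) :
    Productive env s₁ ∧ Productive env s₂ := by
  suffices ∀ {C : Type} {s : Syn Token Kind Var C}, Productive env s →
      OnSeqn (fun s₁ s₂ => Productive env s₁ ∧ Productive env s₂) s from this h
  intro _ _ h
  cases h with
  | seqn h₁ h₂ => exact ⟨h₁, h₂⟩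
  | _ => trivial

theorem InFirst.seqn_inv {k : Kind} (h : InFirst env k (Syn.seqn s₁ s₂)) :
    (InFirst env k s₁ ∧ Productive env s₂) ∨ ∃ v, Nullable env s₁ v ∧ InFirst env k s₂ := by
  suffices ∀ {C : Type} {s : Syn Token Kind Var C}, InFirst env k s →
      OnSeqn (fun s₁ s₂ => (InFirst env k s₁ ∧ Productive env s₂) ∨
        ∃ v, Nullable env s₁ v ∧ InFirst env k s₂) s from this h
  intro _ _ h
  cases h with
  | seqnL h₁ h₂ => exact .inl ⟨h₁, h₂⟩
  | seqnR h₁ h₂ => exact .inr ⟨_, h₁, h₂⟩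
  | _ => trivial

theorem InSNF.seqn_inv {k : Kind} (h : InSNF env k (Syn.seqn s₁ s₂)) :
    (InSNF env k s₁ ∧ ∃ v, Nullable env s₂ v) ∨ (Productive env s₁ ∧ InSNF env k s₂) := by
  suffices ∀ {C : Type} {s : Syn Token Kind Var C}, InSNF env k s →
      OnSeqn (fun s₁ s₂ => (InSNF env k s₁ ∧ ∃ v, Nullable env s₂ v) ∨
        (Productive env s₁ ∧ InSNF env k s₂)) s from this h
  intro _ _ h
  cases h with
  | seqnL h₁ h₂ => exact .inl ⟨h₁, _, h₂⟩
  | seqnR h₁ h₂ => exact .inr ⟨h₁, h₂⟩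
  | _ => trivial

theorem HasConflict.seqn_inv (h : HasConflict env (Syn.seqn s₁ s₂)) :
    (∃ k, InSNF env k s₁ ∧ InFirst env k s₂) ∨ HasConflict env s₁ ∨ HasConflict env s₂ := by
  suffices ∀ {C : Type} {s : Syn Token Kind Var C}, HasConflict env s →
      OnSeqn (fun s₁ s₂ => (∃ k, InSNF env k s₁ ∧ InFirst env k s₂) ∨
        HasConflict env s₁ ∨ HasConflict env s₂) s from this h
  intro _ _ h
  cases h with
  | seqnSF h₁ h₂ => exact .inl ⟨_, h₁, h₂⟩
  | seqnL h₁ => exact .inr (.inl h₁)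
  | seqnR h₂ => exact .inr (.inr h₂)
  | _ => trivial

variable {s : Syn Token Kind Var A}

theorem Matches.productive {l : List Token} {v : A} (h : Matches kd env s l v) :
    Productive env s := by
  induction h with
  | elem => exact .elem _
  | eps v => exact .eps v
  | disjL _ ih => exact .disjL ih
  | disjR _ ih => exact .disjR ih
  | seqn _ _ ih₁ ih₂ => exact .seqn ih₁ ih₂
  | map f _ ih => exact .map f ih
  | var x _ ih => exact .var x ih

theorem Nullable.matches_nil {v : A} (h : Nullable env s v) : Matches kd env s [] v := by
  induction h with
  | eps v => exact .eps v
  | disjL _ ih => exact .disjL ih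
  | disjR _ ih => exact .disjR ih
  | seqn _ _ ih₁ ih₂ => exact .seqn ih₁ ih₂
  | map f _ ih => exact .map f ih
  | var x _ ih => exact .var x ih

theorem Nullable.productive {v : A} (h : Nullable env s v) : Productive env s := by
  induction h with
  | eps v => exact .eps v
  | disjL _ ih => exact .disjL ih
  | disjR _ ih => exact .disjR ih
  | seqn _ _ ih₁ ih₂ => exact .seqn ih₁ ih₂
  | map f _ ih => exact .map f ih
  | var x _ ih => exact .var x ih

theorem Matches.nullable {v : A} (h : Matches kd env s [] v) : Nullable env s v := by
  generalize hl : ([] : List Token) = l at h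
  induction h with
  | elem => simp at hl
  | eps v => exact .eps v
  | disjL _ ih => exact .disjL (ih hl)
  | disjR _ ih => exact .disjR (ih hl)
  | seqn _ _ ih₁ ih₂ =>
    obtain ⟨h₁, h₂⟩ := List.append_eq_nil_iff.mp hl.symm
    exact .seqn (ih₁ h₁.symm) (ih₂ h₂.symm)
  | map f _ ih => exact .map f (ih hl)
  | var x _ ih => exact .var x (ih hl)

theorem Matches.first {t : Token} {l : List Token} {v : A} (h : Matches kd env s (t :: l) v) :
    InFirst env (kd t) s := by
  generalize hl : t :: l = l' at h
  induction h generalizing l with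
  | elem hk =>
    obtain ⟨rfl, -⟩ := List.cons_eq_cons.mp hl
    exact hk ▸ .elem _
  | eps => simp at hl
  | disjL _ ih => exact .disjL (ih hl)
  | disjR _ ih => exact .disjR (ih hl)
  | @seqn _ _ _ _ ts₁ _ _ _ h₁ h₂ ih₁ ih₂ =>
    cases ts₁ with
    | nil => exact .seqnR h₁.nullable (ih₂ hl)
    | cons a ts₁ =>
      obtain ⟨rfl, -⟩ := List.cons_eq_cons.mp hl
      exact .seqnL (ih₁ rfl) h₂.productive
  | map f _ ih => exact .map f (ih hl)
  | var x _ ih => exact .var x (ih hl)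

theorem Nullable.unique {u u' : A} (hc : ¬ HasConflict env s) (h : Nullable env s u)
    (h' : Nullable env s u') : u = u' := by
  induction h with
  | eps => cases h'; rfl
  | disjL h ih =>
    cases h' with
    | disjL h' => exact ih (hc ∘ .disjL) h'
    | disjR h' => exact absurd (.disjNN h h') hc
  | disjR h ih =>
    cases h' with
    | disjL h' => exact absurd (.disjNN h' h) hc
    | disjR h' => exact ih (hc ∘ .disjR) h'
  | seqn _ _ ih₁ ih₂ =>
    obtain ⟨h₁', h₂'⟩ := h'.seqn_inv
    exact Prod.ext (ih₁ (hc ∘ .seqnL) h₁') (ih₂ (hc ∘ .seqnR) h₂')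
  | map f _ ih =>
    cases h' with
    | map _ h' => exact congrArg f (ih (hc ∘ .map f) h')
  | var x _ ih =>
    cases h' with
    | var _ h' => exact ih (hc ∘ .var x) h'

theorem InFirst.snf_of_nullable {k : Kind} {v : A} (hf : InFirst env k s)
    (hc : ¬ HasConflict env s) (hn : Nullable env s v) : InSNF env k s := by
  induction hf with
  | elem => cases hn
  | disjL hf₁ ih =>
    cases hn with
    | disjL hn₁ => exact .disjL (ih (hc ∘ .disjL) hn₁)
    | disjR hn₂ => exact .disjFN hf₁ hn₂
  | disjR hf₂ ih =>
    cases hn with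
    | disjL hn₁ => exact .disjNF hn₁ hf₂
    | disjR hn₂ => exact .disjR (ih (hc ∘ .disjR) hn₂)
  | seqnL _ _ ih =>
    obtain ⟨hn₁, hn₂⟩ := hn.seqn_inv
    exact .seqnL (ih (hc ∘ .seqnL) hn₁) hn₂
  | seqnR _ _ ih =>
    obtain ⟨hn₁, hn₂⟩ := hn.seqn_inv
    exact .seqnR hn₁.productive (ih (hc ∘ .seqnR) hn₂)
  | map f _ ih =>
    cases hn with
    | map _ hn => exact .map f (ih (hc ∘ .map f) hn)
  | var x _ ih =>
    cases hn with
    | var _ hn => exact .var x (ih (hc ∘ .var x) hn)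

end
/-- The invariant under which LL(1)-ness passes from `unfocus s' c` to `unfocus s c`; all five
static predicates are tracked because `seqn` layers mix them. -/
structure Refines {Token Kind : Type} {Var : Type → Type}
    (env : ∀ A : Type, Var A → Syn Token Kind Var A) {A : Type}
    (s s' : Syn Token Kind Var A) : Prop where
  productive : Productive env s → Productive env s'
  nullable : ∀ {v}, Nullable env s v → Nullable env s' v
  first : ∀ {k}, InFirst env k s → InFirst env k s'
  snf : ∀ {k}, InSNF env k s → InSNF env k s'
  conflict : HasConflict env s → HasConflict env s'

section

variable {Token Kind : Type} {Var : Type → Type}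
variable {env : ∀ A : Type, Var A → Syn Token Kind Var A}

namespace Refines

variable {A B : Type}

protected theorem refl (s : Syn Token Kind Var A) : Refines env s s :=
  ⟨id, id, id, id, id⟩

theorem map (f : A → B) {s s' : Syn Token Kind Var A} (h : Refines env s s') :
    Refines env (Syn.map f s) (Syn.map f s') where
  productive := by rintro ⟨⟩; exact .map f (h.productive ‹_›)
  nullable := by rintro _ ⟨⟩; exact .map f (h.nullable ‹_›)
  first := by rintro _ ⟨⟩; exact .map f (h.first ‹_›)
  snf := by rintro _ ⟨⟩; exact .map f (h.snf ‹_›)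
  conflict := by rintro ⟨⟩; exact .map f (h.conflict ‹_›)

theorem seqn {s₁ s₁' : Syn Token Kind Var A} {s₂ s₂' : Syn Token Kind Var B}
    (h₁ : Refines env s₁ s₁') (h₂ : Refines env s₂ s₂') :
    Refines env (Syn.seqn s₁ s₂) (Syn.seqn s₁' s₂') where
  productive hp :=
    have ⟨hp₁, hp₂⟩ := hp.seqn_inv
    .seqn (h₁.productive hp₁) (h₂.productive hp₂)
  nullable hn :=
    have ⟨hn₁, hn₂⟩ := hn.seqn_inv
    .seqn (h₁.nullable hn₁) (h₂.nullable hn₂)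
  first hf := by
    rcases hf.seqn_inv with ⟨hf₁, hp₂⟩ | ⟨_, hn₁, hf₂⟩
    · exact .seqnL (h₁.first hf₁) (h₂.productive hp₂)
    · exact .seqnR (h₁.nullable hn₁) (h₂.first hf₂)
  snf hs := by
    rcases hs.seqn_inv with ⟨hs₁, _, hn₂⟩ | ⟨hp₁, hs₂⟩
    · exact .seqnL (h₁.snf hs₁) (h₂.nullable hn₂)
    · exact .seqnR (h₁.productive hp₁) (h₂.snf hs₂)
  conflict hc := by
    rcases hc.seqn_inv with ⟨_, hs₁, hf₂⟩ | hc₁ | hc₂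
    · exact .seqnSF (h₁.snf hs₁) (h₂.first hf₂)
    · exact .seqnL (h₁.conflict hc₁)
    · exact .seqnR (h₂.conflict hc₂)

theorem eps_of_nullable {s : Syn Token Kind Var A} {v : A} (hn : Nullable env s v) :
    Refines env (Syn.eps v) s where
  productive _ := hn.productive
  nullable := by rintro _ ⟨⟩; exact hn
  first := by rintro _ ⟨⟩
  snf := by rintro _ ⟨⟩
  conflict := by rintro ⟨⟩

theorem disjL {s₁ s₂ : Syn Token Kind Var A} : Refines env s₁ (Syn.disj s₁ s₂) :=
  ⟨.disjL, .disjL, .disjL, .disjL, .disjL⟩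

theorem disjR {s₁ s₂ : Syn Token Kind Var A} : Refines env s₂ (Syn.disj s₁ s₂) :=
  ⟨.disjR, .disjR, .disjR, .disjR, .disjR⟩

theorem var (x : Var A) : Refines env (env A x) (Syn.var x) :=
  ⟨.var x, .var x, .var x, .var x, .var x⟩

theorem unfocus : ∀ {A B : Type} {s s' : Syn Token Kind Var A} (c : Ctx Token Kind Var A B),
    Refines env s s' → Refines env (_root_.unfocus s c) (_root_.unfocus s' c)
  | _, _, _, _, .nil, h => h
  | _, _, _, _, .cons (.apply f) c, h => unfocus c (h.map f)
  | _, _, _, _, .cons (.prepend _) c, h => unfocus c ((Refines.refl _).seqn h)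
  | _, _, _, _, .cons (.followBy s₂) c, h => unfocus c (h.seqn (.refl s₂))

end Refines

theorem HasConflict.unfocus : ∀ {A B : Type} {s : Syn Token Kind Var A}
    (c : Ctx Token Kind Var A B), HasConflict env s → HasConflict env (_root_.unfocus s c)
  | _, _, _, .nil, h => h
  | _, _, _, .cons (.apply f) c, h => HasConflict.unfocus c (.map f h)
  | _, _, _, .cons (.prepend _) c, h => HasConflict.unfocus c (.seqnR h)
  | _, _, _, .cons (.followBy _) c, h => HasConflict.unfocus c (.seqnL h)

end
/-- `CtxMatches kd env c l u w`: the context `c`, given the value `u` of its focus, consumes `l`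
and produces `w`. -/
def CtxMatches {Token Kind : Type} {Var : Type → Type} (kd : Token → Kind)
    (env : ∀ A : Type, Var A → Syn Token Kind Var A) :
    ∀ {A B : Type}, Ctx Token Kind Var A B → List Token → A → B → Prop
  | _, _, .nil, l, u, w => l = [] ∧ u = w
  | _, _, .cons (.apply f) c, l, u, w => CtxMatches kd env c l (f u) w
  | _, _, .cons (.prepend v) c, l, u, w => CtxMatches kd env c l (v, u) w
  | _, _, .cons (.followBy s) c, l, u, w =>
      ∃ l₁ l₂ u', l = l₁ ++ l₂ ∧ Matches kd env s l₁ u' ∧ CtxMatches kd env c l₂ (u, u') w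

section

variable {Token Kind : Type} {Var : Type → Type}
variable {kd : Token → Kind} {env : ∀ A : Type, Var A → Syn Token Kind Var A}

theorem matches_unfocus_iff : ∀ {A B : Type} {s : Syn Token Kind Var A}
    (c : Ctx Token Kind Var A B) {l : List Token} {w : B},
    Matches kd env (unfocus s c) l w ↔
      ∃ l₁ l₂ u, l = l₁ ++ l₂ ∧ Matches kd env s l₁ u ∧ CtxMatches kd env c l₂ u w
  | _, _, s, .nil, l, w => by
    refine ⟨fun h => ⟨l, [], w, (List.append_nil l).symm, h, rfl, rfl⟩, ?_⟩
    rintro ⟨l₁, _, _, rfl, hm, rfl, rfl⟩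
    simpa [unfocus] using hm
  | _, _, s, .cons (.apply f) c, l, w => by
    refine (matches_unfocus_iff (s := Syn.map f s) c).trans ⟨?_, ?_⟩
    · rintro ⟨l₁, l₂, _, rfl, ⟨⟩, hr⟩
      exact ⟨l₁, l₂, _, rfl, ‹_›, hr⟩
    · rintro ⟨l₁, l₂, u, rfl, hm, hr⟩
      exact ⟨l₁, l₂, f u, rfl, .map f hm, hr⟩
  | _, _, s, .cons (.prepend v) c, l, w => by
    refine (matches_unfocus_iff (s := Syn.seqn (Syn.eps v) s) c).trans ⟨?_, ?_⟩
    · rintro ⟨_, l₂, ⟨u₁, u₂⟩, rfl, hm, hr⟩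
      obtain ⟨_, l₁, rfl, ⟨⟩, hm₂⟩ := hm.seqn_inv
      exact ⟨l₁, l₂, u₂, rfl, hm₂, hr⟩
    · rintro ⟨l₁, l₂, u, rfl, hm, hr⟩
      exact ⟨l₁, l₂, (v, u), rfl, .seqn (.eps v) hm, hr⟩
  | _, _, s, .cons (.followBy s₂) c, l, w => by
    refine (matches_unfocus_iff (s := Syn.seqn s s₂) c).trans ⟨?_, ?_⟩
    · rintro ⟨_, l₃, ⟨u₁, u₂⟩, rfl, hm, hr⟩
      obtain ⟨l₁, l₂, rfl, hm₁, hm₂⟩ := hm.seqn_inv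
      exact ⟨l₁, l₂ ++ l₃, u₁, List.append_assoc _ _ _, hm₁, l₂, l₃, u₂, rfl, hm₂, hr⟩
    · rintro ⟨l₁, _, u, rfl, hm₁, l₂, l₃, u₂, rfl, hm₂, hr⟩
      exact ⟨l₁ ++ l₂, l₃, (u, u₂), (List.append_assoc _ _ _).symm, .seqn hm₁ hm₂, hr⟩

theorem matches_unfocus_mono {A B : Type} {s s' : Syn Token Kind Var A}
    (c : Ctx Token Kind Var A B) (h : ∀ {l u}, Matches kd env s l u → Matches kd env s' l u)
    {l : List Token} {w : B} (hm : Matches kd env (unfocus s c) l w) :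
    Matches kd env (unfocus s' c) l w := by
  obtain ⟨l₁, l₂, u, rfl, hm, hr⟩ := (matches_unfocus_iff c).1 hm
  exact (matches_unfocus_iff c).2 ⟨l₁, l₂, u, rfl, h hm, hr⟩

theorem InSNF.hasConflict_unfocus {t : Token} : ∀ {A B : Type} {s : Syn Token Kind Var A}
    (c : Ctx Token Kind Var A B) {l : List Token} {u : A} {w : B},
    InSNF env (kd t) s → CtxMatches kd env c (t :: l) u w → HasConflict env (unfocus s c)
  | _, _, _, .nil, _, _, _, _, hr => nomatch hr.1
  | _, _, _, .cons (.apply f) c, _, _, _, hs, hr => hasConflict_unfocus c (.map f hs) hr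
  | _, _, _, .cons (.prepend v) c, _, _, _, hs, hr =>
      hasConflict_unfocus c (.seqnR (.eps v) hs) hr
  | _, _, _, .cons (.followBy _) c, _, _, _, hs, hr => by
    obtain ⟨l₁, _, _, he, hm, hr⟩ := hr
    cases l₁ with
    | nil =>
      rw [List.nil_append] at he
      exact hasConflict_unfocus c (.seqnL hs hm.nullable) (he ▸ hr)
    | cons a l₁ =>
      obtain ⟨rfl, -⟩ := List.cons_eq_cons.mp he
      exact HasConflict.unfocus c (.seqnSF hs hm.first)

end

section

variable {Token Kind : Type} {Var : Type → Type}
variable {kd : Token → Kind} {env : ∀ A : Type, Var A → Syn Token Kind Var A}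
variable {A : Type} {t : Token} {l : List Token}

theorem Matches.disj_left_of_not_first {s₁ s₂ : Syn Token Kind Var A} {u : A}
    (h : Matches kd env (Syn.disj s₁ s₂) (t :: l) u) (hf : ¬ InFirst env (kd t) s₂) :
    Matches kd env s₁ (t :: l) u := by
  cases h with
  | disjL h => exact h
  | disjR h => exact absurd h.first hf

theorem Matches.disj_right_of_not_first {s₁ s₂ : Syn Token Kind Var A} {u : A}
    (h : Matches kd env (Syn.disj s₁ s₂) (t :: l) u) (hf : ¬ InFirst env (kd t) s₁) :
    Matches kd env s₂ (t :: l) u := by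
  cases h with
  | disjL h => exact absurd h.first hf
  | disjR h => exact h

theorem matches_var_iff (x : Var A) {u : A} :
    Matches kd env (Syn.var x) l u ↔ Matches kd env (env A x) l u :=
  ⟨fun h => by cases h; assumption, .var x⟩

variable {B : Type} {s₁ : Syn Token Kind Var A} {s₂ : Syn Token Kind Var B} {v₁ : A}

theorem Matches.seqn_of_eps (hn : Nullable env s₁ v₁) {u : A × B}
    (h : Matches kd env (Syn.seqn (Syn.eps v₁) s₂) l u) : Matches kd env (Syn.seqn s₁ s₂) l u := by
  obtain ⟨_, l₂, rfl, ⟨⟩, h₂⟩ := h.seqn_inv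
  exact .seqn hn.matches_nil h₂

/-- `s₁` cannot read `t`, so it reads nothing and yields its unique null value. -/
theorem Matches.seqn_eps_of_not_first (hc : ¬ HasConflict env s₁) (hn : Nullable env s₁ v₁)
    (hf : ¬ InFirst env (kd t) s₁) {u : A × B}
    (h : Matches kd env (Syn.seqn s₁ s₂) (t :: l) u) :
    Matches kd env (Syn.seqn (Syn.eps v₁) s₂) (t :: l) u := by
  obtain ⟨l₁, l₂, he, h₁, h₂⟩ := h.seqn_inv
  cases l₁ with
  | nil =>
    obtain ⟨u₁, u₂⟩ := u
    obtain rfl : u₁ = v₁ := h₁.nullable.unique hc hn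
    exact he ▸ .seqn (.eps u₁) h₂
  | cons a l₁ =>
    obtain ⟨rfl, -⟩ := List.cons_eq_cons.mp he
    exact absurd h₁.first hf

/-- A match in which `s'` reads nothing is impossible: it would make `kd t` both follow the
nullable `s'` and start what the context reads next. -/
theorem matches_unfocus_cons_iff {s s' : Syn Token Kind Var A} (c : Ctx Token Kind Var A B)
    (hll : ¬ HasConflict env (unfocus s' c)) (hf : InFirst env (kd t) s')
    (hsub : ∀ {l u}, Matches kd env s l u → Matches kd env s' l u)
    (hsup : ∀ {l u}, Matches kd env s' (t :: l) u → Matches kd env s (t :: l) u)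
    {ts : List Token} {w : B} :
    Matches kd env (unfocus s c) (t :: ts) w ↔ Matches kd env (unfocus s' c) (t :: ts) w := by
  refine ⟨matches_unfocus_mono c hsub, fun h => ?_⟩
  obtain ⟨l₁, l₂, u, he, hm, hr⟩ := (matches_unfocus_iff c).1 h
  cases l₁ with
  | nil =>
    rw [List.nil_append] at he
    have hsnf := hf.snf_of_nullable (mt (HasConflict.unfocus c) hll) hm.nullable
    exact absurd (hsnf.hasConflict_unfocus c (he ▸ hr)) hll
  | cons a l₁ =>
    obtain ⟨rfl, rfl⟩ := List.cons_eq_cons.mp he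
    exact (matches_unfocus_iff c).2 ⟨t :: l₁, l₂, u, rfl, hsup hm, hr⟩

end

section

variable {Token Kind : Type} {Var : Type → Type}
variable (kd : Token → Kind) (env : ∀ A : Type, Var A → Syn Token Kind Var A)

theorem pierce_correct
    (nullOpt : ∀ {A : Type}, Syn Token Kind Var A → Option A)
    (hnull : ∀ {A : Type} (s : Syn Token Kind Var A), ¬ HasConflict env s →
      ∀ v : A, nullOpt s = some v ↔ Nullable env s v)
    (pierce : ∀ {A B : Type}, Kind → Syn Token Kind Var A → Ctx Token Kind Var A B →
      Ctx Token Kind Var Token B)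
    (hpierce_elem : ∀ {B : Type} (k : Kind) (c : Ctx Token Kind Var Token B),
      pierce k (Syn.elem k) c = c)
    (hpierce_disj₁ : ∀ {A B : Type} (k : Kind) (s₁ s₂ : Syn Token Kind Var A)
      (c : Ctx Token Kind Var A B),
      ¬ HasConflict env (Syn.disj s₁ s₂) → InFirst env k (Syn.disj s₁ s₂) →
      InFirst env k s₁ → pierce k (Syn.disj s₁ s₂) c = pierce k s₁ c)
    (hpierce_disj₂ : ∀ {A B : Type} (k : Kind) (s₁ s₂ : Syn Token Kind Var A)
      (c : Ctx Token Kind Var A B),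
      ¬ HasConflict env (Syn.disj s₁ s₂) → InFirst env k (Syn.disj s₁ s₂) →
      ¬ InFirst env k s₁ → pierce k (Syn.disj s₁ s₂) c = pierce k s₂ c)
    (hpierce_seqn₁ : ∀ {A B C : Type} (k : Kind) (s₁ : Syn Token Kind Var A)
      (s₂ : Syn Token Kind Var B) (c : Ctx Token Kind Var (A × B) C),
      ¬ HasConflict env (Syn.seqn s₁ s₂) → InFirst env k (Syn.seqn s₁ s₂) →
      (nullOpt s₁ = none ∨ InFirst env k s₁) →
      pierce k (Syn.seqn s₁ s₂) c = pierce k s₁ (Ctx.cons (Layer.followBy s₂) c))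
    (hpierce_seqn₂ : ∀ {A B C : Type} (k : Kind) (s₁ : Syn Token Kind Var A)
      (s₂ : Syn Token Kind Var B) (c : Ctx Token Kind Var (A × B) C) (v : A),
      ¬ HasConflict env (Syn.seqn s₁ s₂) → InFirst env k (Syn.seqn s₁ s₂) →
      nullOpt s₁ = some v → ¬ InFirst env k s₁ →
      pierce k (Syn.seqn s₁ s₂) c = pierce k s₂ (Ctx.cons (Layer.prepend v) c))
    (hpierce_map : ∀ {A B C : Type} (k : Kind) (f : A → B) (s : Syn Token Kind Var A)
      (c : Ctx Token Kind Var B C),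
      ¬ HasConflict env (Syn.map f s) → InFirst env k (Syn.map f s) →
      pierce k (Syn.map f s) c = pierce k s (Ctx.cons (Layer.apply f) c))
    (hpierce_var : ∀ {A B : Type} (k : Kind) (x : Var A) (c : Ctx Token Kind Var A B),
      ¬ HasConflict env (Syn.var x : Syn Token Kind Var A) →
      InFirst env k (Syn.var x : Syn Token Kind Var A) →
      pierce k (Syn.var x) c = pierce k (env A x) c)
    {A B : Type} (s : Syn Token Kind Var A) (c : Ctx Token Kind Var A B)
    (t : Token) (k : Kind) (hk : kd t = k)
    (hll1 : ¬ HasConflict env (unfocus s c)) (hf : InFirst env k s)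
    (ts : List Token) (v : B) :
    Matches kd env (unfocus (Syn.elem k) (pierce k s c)) (t :: ts) v ↔
      Matches kd env (unfocus s c) (t :: ts) v := by
  induction hf with
  | elem => rw [hpierce_elem]
  | @disjL _ _ s₁ s₂ hf₁ ih =>
    subst hk
    have hc := mt (HasConflict.unfocus c) hll1
    have hf₂ : ¬ InFirst env (kd t) s₂ := fun hf₂ => hc (.disjFF hf₁ hf₂)
    rw [hpierce_disj₁ _ s₁ s₂ c hc (.disjL hf₁) hf₁]
    exact (ih c rfl (mt ((Refines.disjL).unfocus c).conflict hll1)).trans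
      (matches_unfocus_cons_iff c hll1 (.disjL hf₁) .disjL (·.disj_left_of_not_first hf₂))
  | @disjR _ _ s₁ s₂ hf₂ ih =>
    subst hk
    have hc := mt (HasConflict.unfocus c) hll1
    have hf₁ : ¬ InFirst env (kd t) s₁ := fun hf₁ => hc (.disjFF hf₁ hf₂)
    rw [hpierce_disj₂ _ s₁ s₂ c hc (.disjR hf₂) hf₁]
    exact (ih c rfl (mt ((Refines.disjR).unfocus c).conflict hll1)).trans
      (matches_unfocus_cons_iff c hll1 (.disjR hf₂) .disjR (·.disj_right_of_not_first hf₁))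
  | @seqnL _ _ _ s₁ s₂ hf₁ hp₂ ih =>
    subst hk
    rw [hpierce_seqn₁ _ s₁ s₂ c (mt (HasConflict.unfocus c) hll1) (.seqnL hf₁ hp₂) (.inr hf₁)]
    exact ih (.cons (.followBy s₂) c) rfl hll1
  | @seqnR _ _ _ s₁ s₂ v₁ hn₁ hf₂ ih =>
    subst hk
    have hc := mt (HasConflict.unfocus c) hll1
    have hc₁ : ¬ HasConflict env s₁ := hc ∘ .seqnL
    have hf₁ : ¬ InFirst env (kd t) s₁ := fun hf₁ =>
      hc (.seqnSF (hf₁.snf_of_nullable hc₁ hn₁) hf₂)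
    rw [hpierce_seqn₂ _ s₁ s₂ c v₁ hc (.seqnR hn₁ hf₂) ((hnull s₁ hc₁ v₁).2 hn₁) hf₁]
    have hr := ((Refines.eps_of_nullable hn₁).seqn (.refl s₂)).unfocus c
    exact (ih (.cons (.prepend v₁) c) rfl (mt hr.conflict hll1)).trans
      (matches_unfocus_cons_iff c hll1 (.seqnR hn₁ hf₂) (·.seqn_of_eps hn₁)
        (·.seqn_eps_of_not_first hc₁ hn₁ hf₁))
  | map f hfs ih =>
    subst hk
    rw [hpierce_map _ f _ c (mt (HasConflict.unfocus c) hll1) (.map f hfs)]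
    exact ih (.cons (.apply f) c) rfl hll1
  | var x hfx ih =>
    subst hk
    rw [hpierce_var _ x c (mt (HasConflict.unfocus c) hll1) (.var x hfx)]
    exact (ih c rfl (mt ((Refines.var x).unfocus c).conflict hll1)).trans
      (matches_unfocus_cons_iff c hll1 (.var x hfx) (matches_var_iff x).2 (matches_var_iff x).1)

end
end

section
/- Once focused on an elem k node, derivation is trivial: for every context c : Context Token B, token t with kind t = k, token sequence ts and value v : B, Matches (unfocus (elem k, c)) (t :: ts) v if and only if Matches (unfocus (epsilon t, c)) ts v. -/
set_option autoImplicit false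

/-!
Call `s'` a derivative of `s` by `t` when `s` matches `t :: ts` with value `w` exactly when `s'`
matches `ts` with value `w`. Every layer of a context preserves this relation, and preserves
the property that `s` matches no value on the empty input; the second property is what stops
a `followBy` layer from consuming `t` in the syntax after the focus. Since `elem k` never
matches the empty input and `eps t` is its derivative by a token `t` of kind `k`, the theorem
follows by induction on the context.
-/

section

variable {Token Kind : Type} {Var : Type → Type}
variable {kd : Token → Kind} {env : ∀ A : Type, Var A → Syn Token Kind Var A}

variable (kd env) in
/-- What a derivation of `Matches kd env s ts w` must end with, read off the head of `s`;
going through it avoids `cases` on a `seqn` match, where the index `A × B` cannot be unified. -/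
def MatchesInversion : ∀ {C : Type}, Syn Token Kind Var C → List Token → C → Prop
  | _, Syn.elem k, ts, w => ts = [w] ∧ kd w = k
  | _, Syn.fail, _, _ => False
  | _, Syn.eps v, ts, w => ts = [] ∧ w = v
  | _, Syn.disj s₁ s₂, ts, w => Matches kd env s₁ ts w ∨ Matches kd env s₂ ts w
  | _, Syn.seqn s₁ s₂, ts, w =>
      ∃ ts₁ ts₂, ts = ts₁ ++ ts₂ ∧ Matches kd env s₁ ts₁ w.1 ∧ Matches kd env s₂ ts₂ w.2
  | _, Syn.map f s, ts, w => ∃ w₀, Matches kd env s ts w₀ ∧ f w₀ = w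
  | _, Syn.var x, ts, w => Matches kd env (env _ x) ts w

theorem Matches.inversion {C : Type} {s : Syn Token Kind Var C} {ts : List Token} {w : C}
    (h : Matches kd env s ts w) : MatchesInversion kd env s ts w := by
  cases h <;> simp only [MatchesInversion] <;> tauto

theorem matches_elem_iff {k : Kind} {ts : List Token} {w : Token} :
    Matches kd env (Syn.elem k) ts w ↔ ts = [w] ∧ kd w = k :=
  ⟨Matches.inversion, fun ⟨hts, hw⟩ => hts ▸ Matches.elem hw⟩

theorem matches_eps_iff {A : Type} {v w : A} {ts : List Token} :
    Matches kd env (Syn.eps v) ts w ↔ ts = [] ∧ w = v :=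
  ⟨Matches.inversion, fun ⟨hts, hw⟩ => by subst hts hw; exact Matches.eps _⟩

theorem matches_map_iff {A B : Type} {f : A → B} {s : Syn Token Kind Var A} {ts : List Token}
    {w : B} : Matches kd env (Syn.map f s) ts w ↔ ∃ w₀, Matches kd env s ts w₀ ∧ f w₀ = w :=
  ⟨Matches.inversion, fun ⟨_, h, hw⟩ => hw ▸ Matches.map f h⟩

theorem matches_seqn_iff {A B : Type} {s₁ : Syn Token Kind Var A} {s₂ : Syn Token Kind Var B}
    {ts : List Token} {w : A × B} :
    Matches kd env (Syn.seqn s₁ s₂) ts w ↔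
      ∃ ts₁ ts₂, ts = ts₁ ++ ts₂ ∧ Matches kd env s₁ ts₁ w.1 ∧ Matches kd env s₂ ts₂ w.2 :=
  ⟨Matches.inversion, fun ⟨_, _, hts, h₁, h₂⟩ => hts ▸ Matches.seqn h₁ h₂⟩

theorem matches_seqn_eps_iff {A B : Type} {v : A} {s : Syn Token Kind Var B} {ts : List Token}
    {w : A × B} :
    Matches kd env (Syn.seqn (Syn.eps v) s) ts w ↔ w.1 = v ∧ Matches kd env s ts w.2 := by
  simp [matches_seqn_iff, matches_eps_iff]

def Layer.wrap : ∀ {A B : Type}, Layer Token Kind Var A B → Syn Token Kind Var A →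
    Syn Token Kind Var B
  | _, _, Layer.apply f, s => Syn.map f s
  | _, _, Layer.prepend v, s => Syn.seqn (Syn.eps v) s
  | _, _, Layer.followBy s', s => Syn.seqn s s'

theorem unfocus_cons {A B C : Type} (l : Layer Token Kind Var A B) (c : Ctx Token Kind Var B C)
    (s : Syn Token Kind Var A) : unfocus s (Ctx.cons l c) = unfocus (l.wrap s) c := by
  cases l <;> rfl

variable (kd env) in
def IsDerivative {A : Type} (t : Token) (s s' : Syn Token Kind Var A) : Prop :=
  ∀ ts w, Matches kd env s (t :: ts) w ↔ Matches kd env s' ts w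

theorem isDerivative_elem_eps {k : Kind} {t : Token} (hk : kd t = k) :
    IsDerivative kd env t (Syn.elem k) (Syn.eps t) := by
  intro ts w
  simp only [matches_elem_iff, matches_eps_iff, List.cons.injEq]
  constructor
  · rintro ⟨⟨rfl, rfl⟩, -⟩
    exact ⟨rfl, rfl⟩
  · rintro ⟨rfl, rfl⟩
    exact ⟨⟨rfl, rfl⟩, hk⟩

theorem not_matches_elem_nil {k : Kind} {w : Token} : ¬ Matches kd env (Syn.elem k) [] w := by
  simp [matches_elem_iff]

theorem not_matches_wrap_nil {A B : Type} (l : Layer Token Kind Var A B)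
    {s : Syn Token Kind Var A} (hs : ∀ w, ¬ Matches kd env s [] w) (w : B) :
    ¬ Matches kd env (l.wrap s) [] w := by
  cases l with
  | apply f => simp [Layer.wrap, matches_map_iff, hs]
  | prepend v => simp [Layer.wrap, matches_seqn_eps_iff, hs]
  | followBy s₂ =>
    rw [Layer.wrap, matches_seqn_iff]
    rintro ⟨ts₁, ts₂, hts, h₁, -⟩
    obtain ⟨rfl, -⟩ := List.append_eq_nil_iff.mp hts.symm
    exact hs _ h₁

theorem IsDerivative.wrap {A B : Type} {t : Token} {s s' : Syn Token Kind Var A}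
    (l : Layer Token Kind Var A B) (hd : IsDerivative kd env t s s')
    (hs : ∀ w, ¬ Matches kd env s [] w) : IsDerivative kd env t (l.wrap s) (l.wrap s') := by
  intro ts w
  cases l with
  | apply f => simp only [Layer.wrap, matches_map_iff, hd ts]
  | prepend v => simp only [Layer.wrap, matches_seqn_eps_iff, hd ts]
  | followBy s₂ =>
    simp only [Layer.wrap, matches_seqn_iff]
    constructor
    · rintro ⟨_ | ⟨t', ts₁⟩, ts₂, hts, h₁, h₂⟩
      · exact absurd h₁ (hs _)
      · obtain ⟨rfl, rfl⟩ : t = t' ∧ ts = ts₁ ++ ts₂ := by simpa using hts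
        exact ⟨ts₁, ts₂, rfl, (hd _ _).1 h₁, h₂⟩
    · rintro ⟨ts₁, ts₂, rfl, h₁, h₂⟩
      exact ⟨t :: ts₁, ts₂, rfl, (hd _ _).2 h₁, h₂⟩

theorem IsDerivative.unfocus {A B : Type} {t : Token} {s s' : Syn Token Kind Var A}
    (c : Ctx Token Kind Var A B) (hd : IsDerivative kd env t s s')
    (hs : ∀ w, ¬ Matches kd env s [] w) :
    IsDerivative kd env t (unfocus s c) (unfocus s' c) := by
  induction c with
  | nil => exact hd
  | cons l c ih =>
    rw [unfocus_cons, unfocus_cons]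
    exact ih (hd.wrap l hs) (not_matches_wrap_nil l hs)

end

section

variable {Token Kind : Type} {Var : Type → Type}
variable (kd : Token → Kind) (env : ∀ A : Type, Var A → Syn Token Kind Var A)

theorem elem_derivation_trivial
    {B : Type} (c : Ctx Token Kind Var Token B) (t : Token) (k : Kind) (hk : kd t = k)
    (ts : List Token) (v : B) :
    Matches kd env (unfocus (Syn.elem k) c) (t :: ts) v ↔
      Matches kd env (unfocus (Syn.eps t) c) ts v :=
  (isDerivative_elem_eps hk).unfocus c (fun _ => not_matches_elem_nil) ts v

end
end
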